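/- Let m, p ≥ 1, let g₁, …, g_m : ℕ → ℝ^p be square-summable signals, and let k₁, …, k_m > 0. Then the supremum of the set { ‖∑_{i=1}^m α_i • shift_{t_i} g_i‖₂ : α ∈ ℝ^m with |α_i| ≤ k_i for all i, t ∈ ℕ^m } is at least (∑_{i=1}^m k_i² ‖g_i‖₂²)^{1/2}. (Lower bound on the ℓ²-sensitivity of a MIMO LTI system.) -/
import Mathlib


/-- Time shift of a signal: `(shift t₀ g) t = g (t - t₀)` if `t ≥ t₀`, and `0` otherwise. -/
noncomputable def shift {E : Type*} [Zero E] (t₀ : ℕ) (g : ℕ → E) : ℕ → E :=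
  fun t => if t₀ ≤ t then g (t - t₀) else 0

/-- ℓ²-norm of a signal. -/
noncomputable def l2norm {E : Type*} [NormedAddCommGroup E] (y : ℕ → E) : ℝ :=
  Real.sqrt (∑' t, ‖y t‖ ^ 2)

open Filter Topology RealInnerProductSpace

namespace MimoAux

variable {p : ℕ}

lemma shift_apply_add {α : Type*} [Zero α] (u : ℕ → α) (t₀ n : ℕ) :
    shift t₀ u (n + t₀) = u n := by
  simp [shift]

lemma summable_shift (u : ℕ → EuclideanSpace ℝ (Fin p))
    (hu : Summable fun t => ‖u t‖ ^ 2) (t₀ : ℕ) :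
    Summable fun t => ‖shift t₀ u t‖ ^ 2 := by
  rw [← summable_nat_add_iff t₀]
  simpa [shift_apply_add] using hu

lemma tsum_shift (u : ℕ → EuclideanSpace ℝ (Fin p))
    (hu : Summable fun t => ‖u t‖ ^ 2) (t₀ : ℕ) :
    ∑' t, ‖shift t₀ u t‖ ^ 2 = ∑' t, ‖u t‖ ^ 2 := by
  rw [← Summable.sum_add_tsum_nat_add t₀ (summable_shift u hu t₀)]
  rw [Finset.sum_eq_zero, zero_add]
  · exact tsum_congr fun n => by rw [shift_apply_add]
  · intro i hi
    have : ¬ t₀ ≤ i := Nat.not_le.mpr (Finset.mem_range.mp hi)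
    simp [shift, this]

lemma memℓp_two (u : ℕ → EuclideanSpace ℝ (Fin p))
    (hu : Summable fun t => ‖u t‖ ^ 2) : Memℓp u 2 := by
  apply memℓp_gen
  have h2 : (2 : ENNReal).toReal = ((2 : ℕ) : ℝ) := by norm_num
  rw [h2]
  simpa only [Real.rpow_natCast] using hu

lemma memℓp_shift (u : ℕ → EuclideanSpace ℝ (Fin p))
    (hu : Summable fun t => ‖u t‖ ^ 2) (t₀ : ℕ) : Memℓp (shift t₀ u) 2 :=
  memℓp_two _ (summable_shift u hu t₀)

lemma norm_eq (f : lp (fun _ : ℕ => EuclideanSpace ℝ (Fin p)) 2) :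
    ‖f‖ = Real.sqrt (∑' t, ‖f t‖ ^ 2) := by
  have h : ‖f‖ ^ 2 = ∑' t, ‖f t‖ ^ 2 := by
    rw [← real_inner_self_eq_norm_sq, lp.inner_eq_tsum]
    exact tsum_congr fun t => real_inner_self_eq_norm_sq _
  rw [← h, Real.sqrt_sq (norm_nonneg f)]

end MimoAux

open MimoAux

set_option maxHeartbeats 1000000 in

theorem mimo_sensitivity_lower_bound (m p : ℕ) (hm : 1 ≤ m) (hp : 1 ≤ p)
    (g : Fin m → ℕ → EuclideanSpace ℝ (Fin p))
    (hg : ∀ i, Summable fun t => ‖g i t‖ ^ 2)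
    (k : Fin m → ℝ) (hk : ∀ i, 0 < k i) :
    Real.sqrt (∑ i, k i ^ 2 * ∑' t', ‖g i t'‖ ^ 2) ≤
      sSup {x : ℝ | ∃ (α : Fin m → ℝ) (t : Fin m → ℕ), (∀ i, |α i| ≤ k i) ∧
        x = l2norm (fun t' => ∑ i, α i • shift (t i) (g i) t')} := by
  classical
  set H := lp (fun _ : ℕ => EuclideanSpace ℝ (Fin p)) 2 with hH
  set G : Fin m → ℝ := fun i => ∑' t, ‖g i t‖ ^ 2 with hGdef
  -- the lp elements given by shifted signals
  let F : ℕ → Fin m → H := fun t₀ i => ⟨shift t₀ (g i), memℓp_shift _ (hg i) t₀⟩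
  have hFcoe : ∀ t₀ i, ∀ t, (F t₀ i : ℕ → EuclideanSpace ℝ (Fin p)) t
      = shift t₀ (g i) t := fun _ _ _ => rfl
  have hFnorm : ∀ t₀ i, ‖F t₀ i‖ = Real.sqrt (G i) := by
    intro t₀ i
    rw [norm_eq]
    congr 1
    exact tsum_shift _ (hg i) t₀
  have hFinner : ∀ t₀ i, ⟪F t₀ i, F t₀ i⟫ = G i := by
    intro t₀ i
    rw [real_inner_self_eq_norm_sq, hFnorm, Real.sq_sqrt]
    exact tsum_nonneg fun t => sq_nonneg _
  -- key: l2norm of a combination equals the lp norm of the lp combination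
  have key_norm : ∀ (α : Fin m → ℝ) (t : Fin m → ℕ),
      l2norm (fun t' => ∑ i, α i • shift (t i) (g i) t') = ‖∑ i, α i • F (t i) i‖ := by
    intro α t
    rw [norm_eq, l2norm]
    congr 1
    refine tsum_congr fun t' => ?_
    congr 1
    have coe_sum : ∀ (s : Finset (Fin m)),
        ((∑ i ∈ s, α i • F (t i) i : H) : ℕ → EuclideanSpace ℝ (Fin p)) t'
          = ∑ i ∈ s, α i • shift (t i) (g i) t' := by
      intro s
      induction s using Finset.induction_on with
      | empty =>
          rw [Finset.sum_empty, Finset.sum_empty]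
          exact congrFun (lp.coeFn_zero _ _) t'
      | @insert a s hnot ih =>
          rw [Finset.sum_insert hnot, Finset.sum_insert hnot]
          have hadd := congrFun (lp.coeFn_add (α a • F (t a) a)
            (∑ i ∈ s, α i • F (t i) i)) t'
          have hsmul := congrFun (lp.coeFn_smul (α a) (F (t a) a)) t'
          rw [hadd, Pi.add_apply, hsmul, Pi.smul_apply, ih]
    rw [coe_sum Finset.univ]
  have hG0 : ∀ i, 0 ≤ G i := fun i => tsum_nonneg fun t => sq_nonneg _
  -- the set is bounded above
  have hbdd : BddAbove {x : ℝ | ∃ (α : Fin m → ℝ) (t : Fin m → ℕ), (∀ i, |α i| ≤ k i) ∧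
      x = l2norm (fun t' => ∑ i, α i • shift (t i) (g i) t')} := by
    refine ⟨∑ i, k i * Real.sqrt (G i), ?_⟩
    rintro x ⟨α, t, hα, rfl⟩
    rw [key_norm]
    calc ‖∑ i, α i • F (t i) i‖ ≤ ∑ i, ‖α i • F (t i) i‖ := norm_sum_le _ _
      _ ≤ ∑ i, k i * Real.sqrt (G i) := by
          refine Finset.sum_le_sum fun i _ => ?_
          rw [norm_smul, hFnorm, Real.norm_eq_abs]
          exact mul_le_mul_of_nonneg_right (hα i) (Real.sqrt_nonneg _)
  -- off-diagonal inner products tend to 0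
  have hlt : ∀ i j : Fin m, (i : ℕ) < (j : ℕ) →
      Tendsto (fun T : ℕ => ⟪F ((i : ℕ) * T) i, F ((j : ℕ) * T) j⟫) atTop (𝓝 0) := by
    intro i j hij
    -- tail sums of g i tend to zero
    have htail : Tendsto (fun d : ℕ => ∑' s, ‖g i (s + d)‖ ^ 2) atTop (𝓝 0) :=
      tendsto_sum_nat_add (fun t => ‖g i t‖ ^ 2)
    have hbound : ∀ T : ℕ,
        |⟪F ((i : ℕ) * T) i, F ((j : ℕ) * T) j⟫| ≤
          Real.sqrt (∑' s, ‖g i (s + T)‖ ^ 2) * Real.sqrt (G j) := by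
      intro T
      set d : ℕ := (j : ℕ) * T - (i : ℕ) * T with hd
      have hij' : (i : ℕ) * T ≤ (j : ℕ) * T := Nat.mul_le_mul_right T hij.le
      have hsum_d : Summable fun s => ‖g i (s + d)‖ ^ 2 :=
        (summable_nat_add_iff d).2 (hg i)
      -- the auxiliary lp element: shift of the tail of g i
      let A : H := ⟨shift ((j : ℕ) * T) (fun s => g i (s + d)),
        memℓp_shift _ hsum_d ((j : ℕ) * T)⟩
      have hinner_eq : ⟪F ((i : ℕ) * T) i, F ((j : ℕ) * T) j⟫ = ⟪A, F ((j : ℕ) * T) j⟫ := by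
        rw [lp.inner_eq_tsum, lp.inner_eq_tsum]
        refine tsum_congr fun t => ?_
        by_cases ht : (j : ℕ) * T ≤ t
        · congr 1
          show shift ((i : ℕ) * T) (g i) t = shift ((j : ℕ) * T) (fun s => g i (s + d)) t
          have h1 : (i : ℕ) * T ≤ t := le_trans hij' ht
          simp only [shift, if_pos ht, if_pos h1]
          have harg : t - (i : ℕ) * T = t - (j : ℕ) * T + d := by omega
          rw [harg]
        · have h0 : (F ((j : ℕ) * T) j : ℕ → EuclideanSpace ℝ (Fin p)) t = 0 := by
            show shift ((j : ℕ) * T) (g j) t = 0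
            simp [shift, ht]
          rw [h0, inner_zero_right, inner_zero_right]
      have hAnorm : ‖A‖ = Real.sqrt (∑' s, ‖g i (s + d)‖ ^ 2) := by
        rw [norm_eq]
        congr 1
        exact tsum_shift _ hsum_d _
      have hCS : |⟪A, F ((j : ℕ) * T) j⟫| ≤ ‖A‖ * ‖F ((j : ℕ) * T) j‖ :=
        abs_real_inner_le_norm _ _
      rw [hinner_eq]
      refine le_trans hCS ?_
      rw [hAnorm, hFnorm]
      -- compare tails: d ≥ T so the tail at d is at most the tail at T
      have hdT : T ≤ d := by
        have h1 : ((i : ℕ) + 1) * T ≤ (j : ℕ) * T := Nat.mul_le_mul_right T hij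
        have h2 : (i : ℕ) * T + T = ((i : ℕ) + 1) * T := by ring
        omega
      have htail_le : ∑' s, ‖g i (s + d)‖ ^ 2 ≤ ∑' s, ‖g i (s + T)‖ ^ 2 := by
        have h1 := Summable.sum_add_tsum_nat_add (f := fun t => ‖g i t‖ ^ 2) d (hg i)
        have h2 := Summable.sum_add_tsum_nat_add (f := fun t => ‖g i t‖ ^ 2) T (hg i)
        have h3 : ∑ s ∈ Finset.range T, ‖g i s‖ ^ 2 ≤ ∑ s ∈ Finset.range d, ‖g i s‖ ^ 2 :=
          Finset.sum_le_sum_of_subset_of_nonneg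
            (Finset.range_subset_range.2 hdT) (fun _ _ _ => sq_nonneg _)
        linarith
      exact mul_le_mul_of_nonneg_right
        (Real.sqrt_le_sqrt htail_le) (Real.sqrt_nonneg _)
    have hlim : Tendsto (fun T : ℕ => Real.sqrt (∑' s, ‖g i (s + T)‖ ^ 2) * Real.sqrt (G j))
        atTop (𝓝 0) := by
      have := (htail.sqrt).mul_const (Real.sqrt (G j))
      simpa using this
    exact squeeze_zero_norm (fun T => by simpa [Real.norm_eq_abs] using hbound T) hlim
  have hoffdiag : ∀ i j : Fin m, i ≠ j →
      Tendsto (fun T : ℕ => ⟪F ((i : ℕ) * T) i, F ((j : ℕ) * T) j⟫) atTop (𝓝 0) := by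
    intro i j hij
    rcases lt_or_gt_of_ne (fun h : (i : ℕ) = (j : ℕ) => hij (Fin.ext h)) with h | h
    · exact hlt i j h
    · have := hlt j i h
      simpa [real_inner_comm] using this
  -- the squared norm of the combination tends to ∑ i, k i ^ 2 * G i
  set Φ : ℕ → H := fun T => ∑ i, k i • F ((i : ℕ) * T) i with hΦ
  have hsq : Tendsto (fun T : ℕ => ⟪Φ T, Φ T⟫) atTop (𝓝 (∑ i, k i ^ 2 * G i)) := by
    have hexp : ∀ T : ℕ, ⟪Φ T, Φ T⟫ =
        ∑ i, ∑ j, k i * k j * ⟪F ((i : ℕ) * T) i, F ((j : ℕ) * T) j⟫ := by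
      intro T
      rw [hΦ]
      rw [sum_inner]
      refine Finset.sum_congr rfl fun i _ => ?_
      rw [real_inner_smul_left, inner_sum, Finset.mul_sum]
      refine Finset.sum_congr rfl fun j _ => ?_
      rw [real_inner_smul_right]
      ring
    simp only [hexp]
    have hlimval : (∑ i, k i ^ 2 * G i) =
        ∑ i : Fin m, ∑ j : Fin m, (if i = j then k i ^ 2 * G i else 0) := by
      refine Finset.sum_congr rfl fun i _ => ?_
      simp
    rw [hlimval]
    refine tendsto_finset_sum _ fun i _ => tendsto_finset_sum _ fun j _ => ?_
    by_cases hij : i = j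
    · subst hij
      simp only [if_pos rfl]
      have : ∀ T : ℕ, k i * k i * ⟪F ((i : ℕ) * T) i, F ((i : ℕ) * T) i⟫ = k i ^ 2 * G i := by
        intro T; rw [hFinner]; ring
      simp only [this]
      exact tendsto_const_nhds
    · simp only [if_neg hij]
      have := (hoffdiag i j hij).const_mul (k i * k j)
      simpa using this
  have hnormlim : Tendsto (fun T : ℕ => ‖Φ T‖) atTop
      (𝓝 (Real.sqrt (∑ i, k i ^ 2 * G i))) := by
    have h1 : (fun T : ℕ => ‖Φ T‖) = fun T => Real.sqrt ⟪Φ T, Φ T⟫ := by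
      funext T
      rw [real_inner_self_eq_norm_sq, Real.sqrt_sq (norm_nonneg _)]
    rw [h1]
    exact hsq.sqrt
  refine le_of_tendsto hnormlim (Filter.Eventually.of_forall fun T => ?_)
  refine le_csSup hbdd ?_
  exact ⟨k, fun i => (i : ℕ) * T, fun i => (abs_of_pos (hk i)).le,
    (key_norm k fun i => (i : ℕ) * T).symm⟩
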